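/- Let G be a finite simple graph, let S ⊆ V(G), and let T, Z ⊆ V(G) \ S, and suppose S and T admit a left-restricted (S,T)-separator. If there is no vertex v ∈ Z such that λ^L_G(S, T ∪ {v}) > λ^L_G(S,T), then λ^L_G(S,T) = λ^L_G(S, T ∪ Z). -/

import Mathlib

open SimpleGraph

/-- `u` can reach `v` in `G` by a walk whose support stays inside `A`. -/
def ReachIn {V : Type} (G : SimpleGraph V) (A : Set V) (u v : V) : Prop :=
  ∃ w : G.Walk u v, ∀ x ∈ w.support, x ∈ A

/-- The set of vertices reachable in `G − P` from a vertex of `S \ P`. -/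
def reachSet {V : Type} (G : SimpleGraph V) (S P : Set V) : Set V :=
  {v | ∃ s ∈ S \ P, ReachIn G Pᶜ s v}

/-- `P` is an unrestricted `(S,T)`-separator: no vertex of `S \ P` reaches a
vertex of `T \ P` in `G − P`. -/
def IsSep {V : Type} (G : SimpleGraph V) (S T P : Set V) : Prop :=
  ∀ s ∈ S \ P, ∀ t ∈ T \ P, ¬ ReachIn G Pᶜ s t

/-- A left-restricted `(S,T)`-separator additionally avoids `S`. -/
def IsLeftSep {V : Type} (G : SimpleGraph V) (S T P : Set V) : Prop :=
  IsSep G S T P ∧ P ∩ S = ∅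

/-- A minimum-size left-restricted `(S,T)`-separator. -/
def IsMinLeftSep {V : Type} (G : SimpleGraph V) (S T P : Set V) : Prop :=
  IsLeftSep G S T P ∧ ∀ Q : Set V, IsLeftSep G S T Q → P.ncard ≤ Q.ncard

/-- `λ^L_G(S,T)`: the minimum size of a left-restricted `(S,T)`-separator,
`⊤` (i.e. `+∞`) if none exists. -/
noncomputable def lamL {V : Type} (G : SimpleGraph V) (S T : Set V) : ℕ∞ :=
  ⨅ (P : Set V) (_ : IsLeftSep G S T P), (P.ncard : ℕ∞)

/-!
Among the minimum left-restricted `(S,T)`-separators choose `P` whose reach set `A` is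
smallest. Suppose some `v ∈ Z` is reached from `S` in `G − P`. Since adding `v` to `T` does
not raise `λ^L`, there is a left-restricted `(S, T ∪ {v})`-separator `Q` with `|Q| = |P|`;
let `B` be its reach set. The outer boundary `N` is submodular and `N(A) ⊆ P`, `N(B) ⊆ Q`,
while `N(A ∩ B)` and `N(A ∪ B)` are left-restricted `(S,T)`-separators, so `N(A ∩ B)` is
again minimum. Its reach set lies in `A ∩ B`, which misses `v ∈ A`, contradicting the choice
of `P`. Hence `P` also separates `S` from `Z`, and `λ^L(S, T ∪ Z) ≤ |P| = λ^L(S, T)`.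
-/

namespace SimpleGraph

variable {V : Type} (G : SimpleGraph V)

def outerBoundary (R : Set V) : Set V := {x | x ∉ R ∧ ∃ u ∈ R, G.Adj u x}

variable {G}

theorem outerBoundary_inter_add_outerBoundary_union_le [Finite V] (A B : Set V) :
    (G.outerBoundary (A ∩ B)).ncard + (G.outerBoundary (A ∪ B)).ncard
      ≤ (G.outerBoundary A).ncard + (G.outerBoundary B).ncard := by
  have h_union : G.outerBoundary (A ∩ B) ∪ G.outerBoundary (A ∪ B)
      ⊆ G.outerBoundary A ∪ G.outerBoundary B := by
    rintro x (⟨hx, u, hu, ha⟩ | ⟨hx, u, hu | hu, ha⟩)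
    · by_cases hxA : x ∈ A
      · exact Or.inr ⟨fun hxB => hx ⟨hxA, hxB⟩, u, hu.2, ha⟩
      · exact Or.inl ⟨hxA, u, hu.1, ha⟩
    · exact Or.inl ⟨fun h => hx (Or.inl h), u, hu, ha⟩
    · exact Or.inr ⟨fun h => hx (Or.inr h), u, hu, ha⟩
  have h_inter : G.outerBoundary (A ∩ B) ∩ G.outerBoundary (A ∪ B)
      ⊆ G.outerBoundary A ∩ G.outerBoundary B := by
    rintro x ⟨⟨-, u, hu, ha⟩, hx, -⟩
    exact ⟨⟨fun h => hx (Or.inl h), u, hu.1, ha⟩, ⟨fun h => hx (Or.inr h), u, hu.2, ha⟩⟩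
  calc _ = (G.outerBoundary (A ∩ B) ∪ G.outerBoundary (A ∪ B)).ncard
          + (G.outerBoundary (A ∩ B) ∩ G.outerBoundary (A ∪ B)).ncard :=
        (Set.ncard_union_add_ncard_inter _ _).symm
    _ ≤ (G.outerBoundary A ∪ G.outerBoundary B).ncard
          + (G.outerBoundary A ∩ G.outerBoundary B).ncard :=
        add_le_add (Set.ncard_le_ncard h_union) (Set.ncard_le_ncard h_inter)
    _ = _ := Set.ncard_union_add_ncard_inter _ _

end SimpleGraph

section Separators

variable {V : Type} {G : SimpleGraph V} {S T P : Set V}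

theorem ReachIn.mem_of_compl_outerBoundary {R : Set V} {s t : V}
    (h : ReachIn G (G.outerBoundary R)ᶜ s t) (hs : s ∈ R) : t ∈ R := by
  obtain ⟨w, hw⟩ := h
  by_contra ht
  obtain ⟨d, hd, hd₁, hd₂⟩ := w.exists_boundary_dart R hs ht
  exact hw _ (w.dart_snd_mem_support_of_mem_darts hd) ⟨hd₂, d.fst, hd₁, d.adj⟩

theorem isLeftSep_outerBoundary {R : Set V} (hSR : S ⊆ R) (hRT : Disjoint R T) :
    IsLeftSep G S T (G.outerBoundary R) := by
  refine ⟨fun s hs t ht hst => hRT.notMem_of_mem_left (hst.mem_of_compl_outerBoundary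
    (hSR hs.1)) ht.1, Set.eq_empty_of_forall_notMem ?_⟩
  rintro x ⟨⟨hxR, -⟩, hxS⟩
  exact hxR (hSR hxS)

theorem reachSet_outerBoundary_subset {R : Set V} (hSR : S ⊆ R) :
    reachSet G S (G.outerBoundary R) ⊆ R := by
  rintro v ⟨s, hs, hsv⟩
  exact hsv.mem_of_compl_outerBoundary (hSR hs.1)

theorem reachSet_subset_compl : reachSet G S P ⊆ Pᶜ := by
  rintro v ⟨s, -, w, hw⟩
  exact hw v w.end_mem_support

theorem subset_reachSet (hPS : P ∩ S = ∅) : S ⊆ reachSet G S P := by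
  intro s hs
  have hsP : s ∉ P := fun h => (Set.eq_empty_iff_forall_notMem.1 hPS) s ⟨h, hs⟩
  exact ⟨s, ⟨hs, hsP⟩, Walk.nil, by simpa using hsP⟩

theorem outerBoundary_reachSet_subset : G.outerBoundary (reachSet G S P) ⊆ P := by
  rintro x ⟨hx, u, ⟨s, hs, w, hw⟩, hux⟩
  by_contra hxP
  refine hx ⟨s, hs, w.concat hux, fun y hy => ?_⟩
  rw [Walk.support_concat, List.mem_append, List.mem_singleton] at hy
  rcases hy with hy | rfl
  exacts [hw y hy, hxP]

theorem IsSep.disjoint_reachSet (h : IsSep G S T P) : Disjoint (reachSet G S P) T :=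
  Set.disjoint_left.2 fun v ⟨s, hs, hsv⟩ hvT =>
    h s hs v ⟨hvT, reachSet_subset_compl ⟨s, hs, hsv⟩⟩ hsv

theorem IsLeftSep.mono_right {T' : Set V} (hP : IsLeftSep G S T' P) (hT : T ⊆ T') :
    IsLeftSep G S T P :=
  ⟨fun s hs t ht => hP.1 s hs t ⟨hT ht.1, ht.2⟩, hP.2⟩

theorem IsLeftSep.union_of_disjoint_reachSet {Z : Set V} (hP : IsLeftSep G S T P)
    (hZ : Disjoint (reachSet G S P) Z) : IsLeftSep G S (T ∪ Z) P := by
  refine ⟨?_, hP.2⟩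
  rintro s hs t ⟨ht | ht, htP⟩ hst
  · exact hP.1 s hs t ⟨ht, htP⟩ hst
  · exact hZ.notMem_of_mem_left ⟨s, hs, hst⟩ ht

theorem lamL_le_of_isLeftSep (hP : IsLeftSep G S T P) : lamL G S T ≤ P.ncard :=
  iInf₂_le P hP

theorem IsMinLeftSep.lamL_eq (hP : IsMinLeftSep G S T P) : lamL G S T = P.ncard :=
  le_antisymm (lamL_le_of_isLeftSep hP.1) (le_iInf₂ fun Q hQ => Nat.cast_le.2 (hP.2 Q hQ))

theorem lamL_mono_right {T' : Set V} (hT : T ⊆ T') : lamL G S T ≤ lamL G S T' :=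
  le_iInf₂ fun _ hP => lamL_le_of_isLeftSep (hP.mono_right hT)

theorem exists_isLeftSep_of_lamL_ne_top (h : lamL G S T ≠ ⊤) : ∃ P, IsLeftSep G S T P := by
  by_contra! hno
  exact h (top_unique (le_iInf₂ fun P hP => absurd hP (hno P)))

variable [Finite V]

theorem exists_isMinLeftSep (hex : ∃ P, IsLeftSep G S T P) : ∃ P, IsMinLeftSep G S T P :=
  let ⟨P, hP, hmin⟩ := Set.exists_min_image {P | IsLeftSep G S T P} Set.ncard
    (Set.toFinite _) hex
  ⟨P, hP, hmin⟩

theorem IsMinLeftSep.outerBoundary_inter_reachSet {Q : Set V} (hP : IsMinLeftSep G S T P)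
    (hQ : IsLeftSep G S T Q) (hQP : Q.ncard ≤ P.ncard) :
    IsMinLeftSep G S T (G.outerBoundary (reachSet G S P ∩ reachSet G S Q)) := by
  set A := reachSet G S P
  set B := reachSet G S Q
  have hSA : S ⊆ A := subset_reachSet hP.1.2
  have hSB : S ⊆ B := subset_reachSet hQ.2
  have hAT : Disjoint A T := hP.1.1.disjoint_reachSet
  have hBT : Disjoint B T := hQ.1.disjoint_reachSet
  have hC := isLeftSep_outerBoundary (G := G) (Set.subset_inter hSA hSB)
    (hAT.mono_left Set.inter_subset_left)
  have h_union := hP.2 _ (isLeftSep_outerBoundary (hSA.trans Set.subset_union_left)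
    (Set.disjoint_union_left.2 ⟨hAT, hBT⟩))
  have h_submod := (G.outerBoundary_inter_add_outerBoundary_union_le A B).trans
    (add_le_add (Set.ncard_le_ncard (outerBoundary_reachSet_subset (P := P)))
      (Set.ncard_le_ncard (outerBoundary_reachSet_subset (P := Q))))
  refine ⟨hC, fun R hR => ?_⟩
  have := hP.2 R hR
  omega

theorem IsMinLeftSep.notMem_reachSet {v : V} (hP : IsMinLeftSep G S T P)
    (hP_reach : ∀ Q, IsMinLeftSep G S T Q → (reachSet G S P).ncard ≤ (reachSet G S Q).ncard)
    (hv : lamL G S (T ∪ {v}) ≤ lamL G S T) : v ∉ reachSet G S P := by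
  intro hvP
  obtain ⟨Q, hQ⟩ := exists_isMinLeftSep (exists_isLeftSep_of_lamL_ne_top
    (hv.trans_lt (hP.lamL_eq ▸ ENat.natCast_lt_top _)).ne)
  have hQP : Q.ncard ≤ P.ncard := by
    rwa [hQ.lamL_eq, hP.lamL_eq, Nat.cast_le] at hv
  have hC := hP.outerBoundary_inter_reachSet (hQ.1.mono_right Set.subset_union_left) hQP
  have hC_reach : reachSet G S (G.outerBoundary (reachSet G S P ∩ reachSet G S Q))
      ⊆ reachSet G S P ∩ reachSet G S Q :=
    reachSet_outerBoundary_subset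
      (Set.subset_inter (subset_reachSet hP.1.2) (subset_reachSet hQ.1.2))
  have hvQ : v ∉ reachSet G S Q :=
    hQ.1.1.disjoint_reachSet.notMem_of_mem_right (Or.inr rfl)
  have hlt : (reachSet G S (G.outerBoundary (reachSet G S P ∩ reachSet G S Q))).ncard
      < (reachSet G S P).ncard :=
    Set.ncard_lt_ncard ⟨hC_reach.trans Set.inter_subset_left,
      fun hsub => hvQ (hC_reach (hsub hvP)).2⟩
  exact (hP_reach _ hC).not_gt hlt

end Separators

theorem stmt7_general {V : Type} [Fintype V] (G : SimpleGraph V) (S T Z : Set V)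
    (hex : ∃ P : Set V, IsLeftSep G S T P)
    (hno : ¬ ∃ v ∈ Z, lamL G S T < lamL G S (T ∪ {v})) :
    lamL G S T = lamL G S (T ∪ Z) := by
  push Not at hno
  obtain ⟨P, hP, hP_reach⟩ := Set.exists_min_image {P | IsMinLeftSep G S T P}
    (fun P => (reachSet G S P).ncard) (Set.toFinite _) (exists_isMinLeftSep hex)
  have hPZ : IsLeftSep G S (T ∪ Z) P := hP.1.union_of_disjoint_reachSet
    (Set.disjoint_right.2 fun v hv => hP.notMem_reachSet hP_reach (hno v hv))
  refine le_antisymm (lamL_mono_right Set.subset_union_left) ?_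
  rw [hP.lamL_eq]
  exact lamL_le_of_isLeftSep hPZ

/-- If no single vertex of `Z` increases `λ^L(S,T)` when added to `T`,
then `λ^L(S,T) = λ^L(S, T ∪ Z)`. -/
theorem stmt7 {V : Type} [Fintype V] (G : SimpleGraph V) (S T Z : Set V)
    (hT : T ⊆ Sᶜ) (hZ : Z ⊆ Sᶜ)
    (hex : ∃ P : Set V, IsLeftSep G S T P)
    (hno : ¬ ∃ v ∈ Z, lamL G S T < lamL G S (T ∪ {v})) :
    lamL G S T = lamL G S (T ∪ Z) :=
  stmt7_general G S T Z hex hno
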